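/- arXiv:2211.08905 — 4 statements merged into one kernel-verified Lean document; each statement's English description precedes it below -/
import Mathlib

section
/- Let θ ∈ (0,1) and y* = (1−θ, θ)ᵀ. Let g : ℝ²_{>0} → ℝ²_{>0} be twice continuously differentiable with g(c·y*) = c·y* for all c > 0 and g₁(y) + g₂(y) = y₁ + y₂ for all y ∈ ℝ²_{>0}. Then the Jacobian Dg(y*) satisfies Dg(y*)·y* = y* and Dg(y*)·(1,−1)ᵀ = R·(1,−1)ᵀ, where R = tr(Dg(y*)) − 1; in particular the spectrum of Dg(y*) is {1, R} with R real. -/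
/-!
Conservation says `g y 0 + g y 1 = y 0 + y 1` near `y*`; differentiating, both column sums of
`J = Dg(y*)` are `1`. Differentiating the fixed ray `c ↦ c • y*` at `c = 1` gives `J y* = y*`.
A `2 × 2` matrix with unit column sums maps `(1, -1)` to `(tr J - 1) • (1, -1)`, and its
characteristic polynomial factors as `(μ - 1) (μ - (tr J - 1))`.
-/

open Filter Topology

namespace Matrix

variable {R : Type*} [CommRing R] (J : Matrix (Fin 2) (Fin 2) R)

theorem mulVec_one_neg_one_of_colSum_eq_one (hcol : ∀ j, J 0 j + J 1 j = 1) :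
    J *ᵥ ![1, -1] = (J.trace - 1) • ![1, -1] := by
  ext i
  fin_cases i <;>
    simp only [mulVec, dotProduct, Fin.sum_univ_two, trace_fin_two, Pi.smul_apply, smul_eq_mul,
      Fin.zero_eta, Fin.mk_one, cons_val_zero, cons_val_one, mul_one, mul_neg]
  · linear_combination -hcol 1
  · linear_combination hcol 0

theorem det_scalar_sub_of_colSum_eq_one (hcol : ∀ j, J 0 j + J 1 j = 1) (μ : R) :
    (algebraMap R (Matrix (Fin 2) (Fin 2) R) μ - J).det = (μ - 1) * (μ - (J.trace - 1)) := by
  simp only [det_fin_two, trace_fin_two, sub_apply, algebraMap_matrix_apply,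
    Algebra.algebraMap_self, RingHom.id_apply, if_pos, zero_ne_one, one_ne_zero, if_false]
  linear_combination (J 1 1 - 1) * hcol 0 - J 1 0 * hcol 1

theorem spectrum_fin_two_of_colSum_eq_one {K : Type*} [Field K] (J : Matrix (Fin 2) (Fin 2) K)
    (hcol : ∀ j, J 0 j + J 1 j = 1) : spectrum K J = {1, J.trace - 1} := by
  ext μ
  rw [spectrum.mem_iff, isUnit_iff_isUnit_det, det_scalar_sub_of_colSum_eq_one J hcol,
    isUnit_iff_ne_zero, not_not, mul_eq_zero, sub_eq_zero, sub_eq_zero]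
  rfl

end Matrix

section

variable {𝕜 E F : Type*} [NontriviallyNormedField 𝕜] [NormedAddCommGroup E] [NormedSpace 𝕜 E]
  [NormedAddCommGroup F] [NormedSpace 𝕜 F]

theorem ContinuousLinearMap.comp_fderiv_eq_of_eventually_comp_eq (L : E →L[𝕜] F)
    {g : E → E} {x : E} (hg : DifferentiableAt 𝕜 g x) (h : (fun y => L (g y)) =ᶠ[𝓝 x] L) :
    L.comp (fderiv 𝕜 g x) = L :=
  ((L.hasFDerivAt.comp x hg.hasFDerivAt).congr_of_eventuallyEq h.symm).unique L.hasFDerivAt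

theorem fderiv_apply_self_of_eventually_fixed_ray {g : E → E} {v : E}
    (hg : DifferentiableAt 𝕜 g v) (h : (fun c : 𝕜 => g (c • v)) =ᶠ[𝓝 1] fun c => c • v) :
    fderiv 𝕜 g v v = v := by
  have hray : HasDerivAt (fun c : 𝕜 => c • v) v 1 := by
    simpa using (hasDerivAt_id (1 : 𝕜)).smul_const v
  have hcomp : HasDerivAt (fun c : 𝕜 => g (c • v)) (fderiv 𝕜 g v v) 1 := by
    have hg' : HasFDerivAt g (fderiv 𝕜 g v) ((1 : 𝕜) • v) := by
      rw [one_smul]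
      exact hg.hasFDerivAt
    exact hg'.comp_hasDerivAt 1 hray
  exact (hcomp.congr_of_eventuallyEq h.symm).unique hray

end

theorem jacobian_spectrum_of_conservative_fixed_ray_general
    (θ : ℝ) (hθ : θ ∈ Set.Ioo (0 : ℝ) 1)
    (g : (Fin 2 → ℝ) → (Fin 2 → ℝ))
    (hsmooth : ContDiffOn ℝ 2 g {y : Fin 2 → ℝ | 0 < y 0 ∧ 0 < y 1})
    (hfix : ∀ c : ℝ, 0 < c → g (c • ![1 - θ, θ]) = c • ![1 - θ, θ])
    (hcons : ∀ y : Fin 2 → ℝ, 0 < y 0 → 0 < y 1 → g y 0 + g y 1 = y 0 + y 1)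
    (J : Matrix (Fin 2) (Fin 2) ℝ)
    (hJ : J = Matrix.of fun i j => fderiv ℝ g ![1 - θ, θ] (Pi.single j 1) i) :
    J.mulVec ![1 - θ, θ] = ![1 - θ, θ] ∧
    J.mulVec ![1, -1] = (J.trace - 1) • ![1, -1] ∧
    spectrum ℝ J = {1, J.trace - 1} := by
  set y : Fin 2 → ℝ := ![1 - θ, θ]
  have hquad : {y : Fin 2 → ℝ | 0 < y 0 ∧ 0 < y 1} ∈ 𝓝 y :=
    ((isOpen_lt continuous_const (continuous_apply 0)).inter
      (isOpen_lt continuous_const (continuous_apply 1))).mem_nhds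
      ⟨sub_pos.2 hθ.2, hθ.1⟩
  have hg : DifferentiableAt ℝ g y := (hsmooth.contDiffAt hquad).differentiableAt two_ne_zero
  set L : (Fin 2 → ℝ) →L[ℝ] ℝ := .proj 0 + .proj 1
  have hL : L.comp (fderiv ℝ g y) = L :=
    L.comp_fderiv_eq_of_eventually_comp_eq hg
      (eventually_of_mem hquad fun z hz => hcons z hz.1 hz.2)
  replace hJ : J = LinearMap.toMatrix' (fderiv ℝ g y : (Fin 2 → ℝ) →ₗ[ℝ] Fin 2 → ℝ) := hJ
  have hcol : ∀ j, J 0 j + J 1 j = 1 := by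
    intro j
    have hsum := congr($hL (Pi.single j 1))
    fin_cases j <;> simpa [hJ, L] using hsum
  refine ⟨?_, J.mulVec_one_neg_one_of_colSum_eq_one hcol,
    J.spectrum_fin_two_of_colSum_eq_one hcol⟩
  rw [hJ, LinearMap.toMatrix'_mulVec]
  exact fderiv_apply_self_of_eventually_fixed_ray hg
    (eventually_of_mem (Ioi_mem_nhds one_pos) hfix)

/-- For θ ∈ (0,1), y* = (1−θ, θ)ᵀ and a C² map `g` on the positive
quadrant fixing every positive multiple of y* and conserving the sum of components,
the Jacobian `J = Dg(y*)` satisfies `J y* = y*`, `J (1,−1)ᵀ = R (1,−1)ᵀ` with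
`R = tr J − 1`, and the spectrum of `J` is `{1, R}`. -/
theorem jacobian_spectrum_of_conservative_fixed_ray
    (θ : ℝ) (hθ : θ ∈ Set.Ioo (0 : ℝ) 1)
    (g : (Fin 2 → ℝ) → (Fin 2 → ℝ))
    (hmap : ∀ y : Fin 2 → ℝ, 0 < y 0 → 0 < y 1 → 0 < g y 0 ∧ 0 < g y 1)
    (hsmooth : ContDiffOn ℝ 2 g {y : Fin 2 → ℝ | 0 < y 0 ∧ 0 < y 1})
    (hfix : ∀ c : ℝ, 0 < c → g (c • ![1 - θ, θ]) = c • ![1 - θ, θ])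
    (hcons : ∀ y : Fin 2 → ℝ, 0 < y 0 → 0 < y 1 → g y 0 + g y 1 = y 0 + y 1)
    (J : Matrix (Fin 2) (Fin 2) ℝ)
    (hJ : J = Matrix.of fun i j => fderiv ℝ g ![1 - θ, θ] (Pi.single j 1) i) :
    J.mulVec ![1 - θ, θ] = ![1 - θ, θ] ∧
    J.mulVec ![1, -1] = (J.trace - 1) • ![1, -1] ∧
    spectrum ℝ J = {1, J.trace - 1} :=
  jacobian_spectrum_of_conservative_fixed_ray_general θ hθ g hsmooth hfix hcons J hJ
end

section
/- Let θ ∈ (0,1) and y* = (1−θ, θ)ᵀ. Let g : ℝ²_{>0} → ℝ²_{>0} be twice continuously differentiable with g(c·y*) = c·y* for all c > 0 and g₁(y) + g₂(y) = y₁ + y₂ for all y ∈ ℝ²_{>0}, and let R = tr(Dg(y*)) − 1. If R < 0, then there exists δ > 0 such that for every ε ∈ (0,1) with 0 < |ε − θ| < δ, the point y¹ := g((1−ε, ε)ᵀ) satisfies (y¹₂ − θ)·(ε − θ) < 0; that is, after one step the second component lands strictly on the opposite side of the steady-state value θ, so the method overshoots the steady state. -/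
open Topology Filter

/-!
Restricted to the line `ε ↦ (1 - ε, ε)`, the second component `φ(ε) = g((1 - ε, ε))₂` fixes
`θ`, and conservation forces `Dg(y*)` to preserve the sum of coordinates, which turns
`φ'(θ) = (Dg(y*)(e₂ - e₁))₂` into `tr Dg(y*) - 1 = R`. A negative derivative at a fixed point
sends every nearby `ε ≠ θ` to the other side of `θ`.
-/

theorem HasFDerivAt.clm_comp_eq_of_eventually_comp_eq {E F G : Type*}
    [NormedAddCommGroup E] [NormedSpace ℝ E] [NormedAddCommGroup F] [NormedSpace ℝ F]
    [NormedAddCommGroup G] [NormedSpace ℝ G] {g : E → F} {D : E →L[ℝ] F} {x : E}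
    (hg : HasFDerivAt g D x) (φ : F →L[ℝ] G) (ψ : E →L[ℝ] G)
    (h : ∀ᶠ y in 𝓝 x, φ (g y) = ψ y) :
    φ.comp D = ψ :=
  ((φ.hasFDerivAt.comp x hg).congr_of_eventuallyEq (h.mono fun _ hy => hy.symm)).unique
    ψ.hasFDerivAt

theorem HasDerivAt.eventually_sub_mul_sub_neg {f : ℝ → ℝ} {f' a : ℝ} (hf : HasDerivAt f f' a)
    (hf' : f' < 0) : ∀ᶠ x in 𝓝[≠] a, (f x - f a) * (x - a) < 0 := by
  filter_upwards [(hasDerivAt_iff_tendsto_slope.mp hf).eventually_lt_const hf',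
    self_mem_nhdsWithin] with x hslope hx
  have hx : x - a ≠ 0 := sub_ne_zero.mpr hx
  calc (f x - f a) * (x - a) = slope f a x * (x - a) ^ 2 := by
        rw [slope_def_field]; field_simp
    _ < 0 := mul_neg_of_neg_of_pos hslope (by positivity)

theorem hasDerivAt_vecCons_one_sub (t : ℝ) :
    HasDerivAt (fun ε : ℝ => (![1 - ε, ε] : Fin 2 → ℝ)) ![-1, 1] t := by
  refine hasDerivAt_pi.mpr fun i => ?_
  fin_cases i
  · simpa using (hasDerivAt_id t).const_sub 1
  · simpa using hasDerivAt_id' t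

theorem apply_vecCons_neg_one_one_of_sum_preserving (D : (Fin 2 → ℝ) →L[ℝ] (Fin 2 → ℝ))
    (hD : ∀ e, D e 0 + D e 1 = e 0 + e 1) :
    D ![-1, 1] 1 =
      (Matrix.of fun i j => D (Pi.single j 1) i : Matrix (Fin 2) (Fin 2) ℝ).trace - 1 := by
  have hv : (![-1, 1] : Fin 2 → ℝ) = Pi.single 1 1 - Pi.single 0 1 := by
    funext i; fin_cases i <;> simp
  have h0 := hD (Pi.single 0 1)
  simp only [Pi.single_eq_same, Pi.single_eq_of_ne (by decide : (1 : Fin 2) ≠ 0)] at h0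
  simp only [hv, map_sub, Pi.sub_apply, Matrix.trace, Matrix.diag, Fin.sum_univ_two,
    Matrix.of_apply]
  linarith

theorem overshoot_of_neg_stability_function_general
    (θ : ℝ) (hθ : θ ∈ Set.Ioo (0 : ℝ) 1)
    (g : (Fin 2 → ℝ) → (Fin 2 → ℝ))
    (hsmooth : ContDiffOn ℝ 2 g {y : Fin 2 → ℝ | 0 < y 0 ∧ 0 < y 1})
    (hfix : ∀ c : ℝ, 0 < c → g (c • ![1 - θ, θ]) = c • ![1 - θ, θ])
    (hcons : ∀ y : Fin 2 → ℝ, 0 < y 0 → 0 < y 1 → g y 0 + g y 1 = y 0 + y 1)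
    (R : ℝ)
    (hR : R = (Matrix.of fun i j =>
      fderiv ℝ g ![1 - θ, θ] (Pi.single j 1) i : Matrix (Fin 2) (Fin 2) ℝ).trace - 1)
    (hRneg : R < 0) :
    ∃ δ > 0, ∀ ε : ℝ, 0 < ε → ε < 1 → 0 < |ε - θ| → |ε - θ| < δ →
      (g ![1 - ε, ε] 1 - θ) * (ε - θ) < 0 := by
  have hpos : {y : Fin 2 → ℝ | 0 < y 0 ∧ 0 < y 1} ∈ 𝓝 ![1 - θ, θ] :=
    ((isOpen_lt continuous_const (continuous_apply 0)).inter
      (isOpen_lt continuous_const (continuous_apply 1))).mem_nhds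
      ⟨by simpa using hθ.2, by simpa using hθ.1⟩
  have hD : HasFDerivAt g (fderiv ℝ g ![1 - θ, θ]) ![1 - θ, θ] :=
    ((hsmooth.contDiffAt hpos).differentiableAt (by norm_num)).hasFDerivAt
  have hsum : ∀ e, fderiv ℝ g ![1 - θ, θ] e 0 + fderiv ℝ g ![1 - θ, θ] e 1 = e 0 + e 1 := by
    let σ : (Fin 2 → ℝ) →L[ℝ] ℝ := .proj 0 + .proj 1
    have hσ := hD.clm_comp_eq_of_eventually_comp_eq σ σ <| by
      filter_upwards [hpos] with y hy using hcons y hy.1 hy.2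
    exact fun e => congrArg (· e) hσ
  have hφ : HasDerivAt (fun ε : ℝ => g ![1 - ε, ε] 1) R θ := by
    rw [hR, ← apply_vecCons_neg_one_one_of_sum_preserving _ hsum]
    exact hasDerivAt_pi.mp (hD.comp_hasDerivAt θ (hasDerivAt_vecCons_one_sub θ)) 1
  have hφθ : g ![1 - θ, θ] 1 = θ := by simpa using congrFun (hfix 1 one_pos) 1
  obtain ⟨δ, hδ, hball⟩ := Metric.eventually_nhds_iff.mp
    (eventually_nhdsWithin_iff.mp (hφ.eventually_sub_mul_sub_neg hRneg))
  refine ⟨δ, hδ, fun ε _ _ hne hlt => ?_⟩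
  simpa [hφθ] using hball (by rwa [Real.dist_eq]) (sub_ne_zero.mp (abs_pos.mp hne))

/-- Under the hypotheses of the main theorem, if the stability value
`R = tr Dg(y*) − 1` is negative, then for all initial states `(1−ε, ε)ᵀ`
sufficiently close to (but different from) the steady state `y* = (1−θ, θ)ᵀ`, the
second component of `y¹ = g((1−ε, ε)ᵀ)` lands strictly on the opposite side of θ,
i.e. the method overshoots the steady state. -/
theorem overshoot_of_neg_stability_function
    (θ : ℝ) (hθ : θ ∈ Set.Ioo (0 : ℝ) 1)
    (g : (Fin 2 → ℝ) → (Fin 2 → ℝ))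
    (hmap : ∀ y : Fin 2 → ℝ, 0 < y 0 → 0 < y 1 → 0 < g y 0 ∧ 0 < g y 1)
    (hsmooth : ContDiffOn ℝ 2 g {y : Fin 2 → ℝ | 0 < y 0 ∧ 0 < y 1})
    (hfix : ∀ c : ℝ, 0 < c → g (c • ![1 - θ, θ]) = c • ![1 - θ, θ])
    (hcons : ∀ y : Fin 2 → ℝ, 0 < y 0 → 0 < y 1 → g y 0 + g y 1 = y 0 + y 1)
    (R : ℝ)
    (hR : R = (Matrix.of fun i j =>
      fderiv ℝ g ![1 - θ, θ] (Pi.single j 1) i : Matrix (Fin 2) (Fin 2) ℝ).trace - 1)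
    (hRneg : R < 0) :
    ∃ δ > 0, ∀ ε : ℝ, 0 < ε → ε < 1 → 0 < |ε - θ| → |ε - θ| < δ →
      (g ![1 - ε, ε] 1 - θ) * (ε - θ) < 0 :=
  overshoot_of_neg_stability_function_general θ hθ g hsmooth hfix hcons R hR hRneg
end

section
/- Let α > 0 and define R(z) = (−z² − 2αz + 2) / (2(1 − αz)(1 − z)) for real z < 0 (the denominator is then positive). Then for every Δt > 0: R(−Δt) < 0 if and only if Δt > α + √(α² + 2). Equivalently, R(−Δt) ≥ 0 if and only if Δt ≤ α + √(α² + 2). -/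
/-- For the MPRK22(α) stability function
`R(z) = (−z² − 2αz + 2)/(2(1 − αz)(1 − z))` evaluated at `z = −Δt` with `Δt > 0`:
`R(−Δt) < 0` iff `Δt > α + √(α² + 2)`, and equivalently `R(−Δt) ≥ 0` iff
`Δt ≤ α + √(α² + 2)`. -/
theorem mprk22_stability_sign
    (α : ℝ) (hα : 0 < α) (Δt : ℝ) (hΔt : 0 < Δt) :
    ((-(-Δt) ^ 2 - 2 * α * (-Δt) + 2) / (2 * (1 - α * (-Δt)) * (1 - (-Δt))) < 0 ↔
      α + Real.sqrt (α ^ 2 + 2) < Δt) ∧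
    (0 ≤ (-(-Δt) ^ 2 - 2 * α * (-Δt) + 2) / (2 * (1 - α * (-Δt)) * (1 - (-Δt))) ↔
      Δt ≤ α + Real.sqrt (α ^ 2 + 2)) := by
  have hs : Real.sqrt (α ^ 2 + 2) ^ 2 = α ^ 2 + 2 := Real.sq_sqrt (by positivity)
  have hs0 : 0 < Real.sqrt (α ^ 2 + 2) := Real.sqrt_pos.mpr (by positivity)
  set s := Real.sqrt (α ^ 2 + 2) with hsdef
  have hsα : α < s := by nlinarith
  have hden : 0 < 2 * (1 - α * (-Δt)) * (1 - (-Δt)) := by nlinarith [mul_pos hα hΔt]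
  have key : (-(-Δt) ^ 2 - 2 * α * (-Δt) + 2) < 0 ↔ α + s < Δt := by
    constructor
    · intro h
      by_contra hle
      push_neg at hle
      nlinarith
    · intro h
      nlinarith
  constructor
  · rw [div_neg_iff]
    constructor
    · rintro (⟨_, h⟩ | ⟨h, _⟩)
      · linarith
      · exact key.mp h
    · intro h
      exact Or.inr ⟨key.mpr h, hden⟩
  · rw [le_div_iff₀ hden, zero_mul, ← not_lt, key, not_lt]
end

section
/- For the MPDeC scheme of order 3 with coefficients θ₀¹ = 5/24, θ₁¹ = 1/3, θ₂¹ = −1/24, θ₀² = 1/6, θ₁² = 2/3, θ₂² = 1/6 (so M = 2 subtimesteps, K = 3 iterations), the stability recursion R^{m,(1)}(z) = (1 + 2z·Σⱼ θ_{j,−}^m)/(1 − z·Σᵣ |θᵣ^m|), R^{m,(k)}(z) = [1 + θ₀^m z + z·Σ_{j=1,j≠m}^{2} θⱼ^m R^{j,(k−1)}(z) − z·(Σ_{j=0,j≠m}^{2} |θⱼ^m| − 2θ_{m,−}^m)·R^{m,(k−1)}(z)] / (1 − z·Σⱼ |θⱼ^m|) yields, for every real z with z ≠ 1 and z ≠ 12/7,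 R₃(z) = R^{2,(3)}(z) = (−331z⁵ + 1830z⁴ + 3096z³ − 16452z² + 16416z − 5184) / (36·(7z − 12)²·(z − 1)³). -/
/-- For MPDeC of order 3 (M = 2 subtimesteps, K = 3 iterations)
with coefficient matrix Θ having rows (5/24, 1/3, −1/24) and (1/6, 2/3, 1/6),
the stability recursion
`R^{m,(1)}(z) = (1 + 2z Σⱼ θ_{j,−}^m)/(1 − z Σᵣ |θᵣ^m|)`,
`R^{m,(k)}(z) = [1 + θ₀^m z + z Σ_{j=1,j≠m}² θⱼ^m R^{j,(k−1)}(z)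
  − z (Σ_{j=0,j≠m}² |θⱼ^m| − 2θ_{m,−}^m) R^{m,(k−1)}(z)] / (1 − z Σⱼ |θⱼ^m|)`
(with `θ_{r,−}^m = (θᵣ^m − |θᵣ^m|)/2`) yields, for every real `z` with `z ≠ 1`
and `z ≠ 12/7`,
`R₃(z) = R^{2,(3)}(z) = (−331z⁵ + 1830z⁴ + 3096z³ − 16452z² + 16416z − 5184)
  / (36 (7z − 12)² (z − 1)³)`.
Here `R m k` encodes `R^{m+1,(k)}(z)` and `θc m r` encodes `θᵣ^{m+1}`. -/
theorem mpdec3_stability_function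
    (z : ℝ) (hz1 : z ≠ 1) (hz2 : z ≠ 12 / 7)
    (θc : Fin 2 → Fin 3 → ℝ)
    (hθc : θc = ![![5 / 24, 1 / 3, -(1 / 24)], ![1 / 6, 2 / 3, 1 / 6]])
    (R : Fin 2 → ℕ → ℝ)
    (hR11 : R 0 1 =
      (1 + 2 * z * ((θc 0 0 - |θc 0 0|) / 2 + (θc 0 1 - |θc 0 1|) / 2
          + (θc 0 2 - |θc 0 2|) / 2))
        / (1 - z * (|θc 0 0| + |θc 0 1| + |θc 0 2|)))
    (hR21 : R 1 1 =
      (1 + 2 * z * ((θc 1 0 - |θc 1 0|) / 2 + (θc 1 1 - |θc 1 1|) / 2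
          + (θc 1 2 - |θc 1 2|) / 2))
        / (1 - z * (|θc 1 0| + |θc 1 1| + |θc 1 2|)))
    (hR1k : ∀ k : ℕ, 2 ≤ k → R 0 k =
      (1 + θc 0 0 * z + z * (θc 0 2 * R 1 (k - 1))
          - z * ((|θc 0 0| + |θc 0 2|) - 2 * ((θc 0 1 - |θc 0 1|) / 2)) * R 0 (k - 1))
        / (1 - z * (|θc 0 0| + |θc 0 1| + |θc 0 2|)))
    (hR2k : ∀ k : ℕ, 2 ≤ k → R 1 k =
      (1 + θc 1 0 * z + z * (θc 1 1 * R 0 (k - 1))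
          - z * ((|θc 1 0| + |θc 1 1|) - 2 * ((θc 1 2 - |θc 1 2|) / 2)) * R 1 (k - 1))
        / (1 - z * (|θc 1 0| + |θc 1 1| + |θc 1 2|))) :
    R 1 3 = (-331 * z ^ 5 + 1830 * z ^ 4 + 3096 * z ^ 3 - 16452 * z ^ 2
        + 16416 * z - 5184)
      / (36 * (7 * z - 12) ^ 2 * (z - 1) ^ 3) := by
  subst hθc
  simp only [Matrix.cons_val_zero, Matrix.cons_val_one, Matrix.head_cons,
    Matrix.cons_val_two, Matrix.tail_cons] at *
  have a1 : |(5:ℝ)/24| = 5/24 := abs_of_nonneg (by norm_num)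
  have a2 : |(1:ℝ)/3| = 1/3 := abs_of_nonneg (by norm_num)
  have a3 : |(-(1/24):ℝ)| = 1/24 := by rw [abs_neg]; exact abs_of_nonneg (by norm_num)
  have b1 : |(1:ℝ)/6| = 1/6 := abs_of_nonneg (by norm_num)
  have b2 : |(2:ℝ)/3| = 2/3 := abs_of_nonneg (by norm_num)
  have h12 := hR1k 2 (by norm_num)
  have h22 := hR2k 2 (by norm_num)
  have h23 := hR2k 3 (by norm_num)
  simp only [a1,a2,a3,b1,b2] at hR11 hR21 h12 h22 h23
  norm_num at h12 h22 h23 hR11 hR21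
  have d1 : (1:ℝ) - z * (7/12) ≠ 0 := by
    intro h; apply hz2; field_simp at h; linarith
  have d2 : (1:ℝ) - z ≠ 0 := by intro h; apply hz1; linarith
  have d3 : (7:ℝ) * z - 12 ≠ 0 := by
    intro h; apply hz2; linarith
  have m01 : R 0 1 * (1 - z * (7/12)) = 1 - z/12 := by
    rw [hR11, div_mul_cancel₀ _ d1]; ring
  have m11 : R 1 1 * (1 - z) = 1 := by
    rw [hR21]; exact inv_mul_cancel₀ d2
  have m02 : R 0 2 * (1 - z * (7/12))
      = 1 + 5/24*z - z/24 * R 1 1 - z/4 * R 0 1 := by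
    rw [h12, div_mul_cancel₀ _ d1]; ring
  have m12 : R 1 2 * (1 - z)
      = 1 + z/6 + 2*z/3 * R 0 1 - 5*z/6 * R 1 1 := by
    rw [h22, div_mul_cancel₀ _ d2]; ring
  have m13 : R 1 3 * (1 - z)
      = 1 + z/6 + 2*z/3 * R 0 2 - 5*z/6 * R 1 2 := by
    rw [h23, div_mul_cancel₀ _ d2]; ring
  have hD : (36 : ℝ) * (7 * z - 12) ^ 2 * (z - 1) ^ 3 ≠ 0 := by
    apply mul_ne_zero (mul_ne_zero (by norm_num) (pow_ne_zero _ d3))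
    exact pow_ne_zero _ (sub_ne_zero.mpr hz1)
  rw [eq_div_iff hD]
  linear_combination (-36*(7*z-12)^2*(z-1)^2) * m13
    + (288*z*(7*z-12)*(z-1)^2) * m02
    + (-30*z*(7*z-12)^2*(z-1)) * m12
    + (48*z^2*(z-1)*(53*z-78)) * m01
    + (-z^2*(7*z-12)*(163*z-288)) * m11
end
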